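/- arXiv:1411.6134 — 3 statements merged into one kernel-verified Lean document; each statement's English description precedes it below -/
import Mathlib

section
/- Let F be a field, n ≥ 1, let ζ ∈ F be a primitive n-th root of unity, let t ∈ F satisfy tⁿ ≠ 1, let b ∈ F, and let j be an integer with 0 ≤ j ≤ n−1. Then (1/n)·Σ_{l=0}^{n−1} ζ^{lj}·(1 − b·ζ^{−l})/(1 − t·ζ^{l}) = (t^{j₀} − b·t^{j₁})/(1 − tⁿ), where j₀ is the representative of −j modulo n in {0,…,n−1} and j₁ is the representative of 1−j modulo n in {0,…,n−1}. (Note that tⁿ ≠ 1 guarantees t·ζ^l ≠ 1 for all l, so all denominators are nonzero.) -/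
open Finset

lemma sum_geom_primitiveRoot_aux (n : ℕ) (a : ℤ) (m k : ℕ) (hm : m < n) (hk : k < n)
    (hkk : (k:ℤ) ≡ a [ZMOD (n:ℤ)]) : ((n:ℤ) ∣ ((m:ℤ) - a)) ↔ m = k := by
  constructor
  · intro h
    have h1 : a ≡ (m:ℤ) [ZMOD (n:ℤ)] := Int.modEq_iff_dvd.mpr h
    have h2 : (k:ℤ) % n = (m:ℤ) % n := hkk.trans h1
    rw [Int.emod_eq_of_lt (by positivity) (by exact_mod_cast hk),
      Int.emod_eq_of_lt (by positivity) (by exact_mod_cast hm)] at h2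
    exact_mod_cast h2.symm
  · rintro rfl
    exact (hkk.symm).dvd

/-- For a primitive `n`-th root of unity `ζ` in a field `F`, `t` with `tⁿ ≠ 1`, `b ∈ F`
and `0 ≤ j ≤ n-1`:
`(1/n) Σ_{l=0}^{n-1} ζ^{lj} (1 - b ζ^{-l})/(1 - t ζ^l) = (t^{j₀} - b t^{j₁})/(1 - tⁿ)`,
where `j₀, j₁ ∈ {0,…,n-1}` are the representatives of `-j` and `1 - j` modulo `n`. -/
theorem sum_geom_primitiveRoot (F : Type*) [Field F] (n : ℕ) (hn : 1 ≤ n)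
    (ζ : F) (hζ : IsPrimitiveRoot ζ n) (t : F) (ht : t ^ n ≠ 1) (b : F)
    (j : ℕ) (hj : j ≤ n - 1)
    (j₀ j₁ : ℕ) (hj₀lt : j₀ < n) (hj₁lt : j₁ < n)
    (hj₀ : (j₀ : ℤ) ≡ -(j : ℤ) [ZMOD (n : ℤ)])
    (hj₁ : (j₁ : ℤ) ≡ 1 - (j : ℤ) [ZMOD (n : ℤ)]) :
    (1 / (n : F)) * ∑ l ∈ Finset.range n,
        ζ ^ (l * j) * (1 - b * ζ ^ (-(l : ℤ))) / (1 - t * ζ ^ l) =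
      (t ^ j₀ - b * t ^ j₁) / (1 - t ^ n) := by
  have hnz : NeZero n := ⟨by omega⟩
  have hnF : (n : F) ≠ 0 := (hζ.neZero').out
  have hζ0 : ζ ≠ 0 := hζ.ne_zero (by omega)
  have hζn : ζ ^ n = 1 := hζ.pow_eq_one
  have htn : (1 : F) - t ^ n ≠ 0 := sub_ne_zero.mpr fun h => ht h.symm
  have hζln : ∀ l : ℕ, ζ ^ (l * n) = 1 := by
    intro l; rw [mul_comm, pow_mul, hζn, one_pow]
  -- denominators are nonzero
  have hden : ∀ l : ℕ, (1 : F) - t * ζ ^ l ≠ 0 := by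
    intro l h
    have h1 : t * ζ ^ l = 1 := by linear_combination -h
    have h2 : (t * ζ ^ l) ^ n = 1 := by rw [h1, one_pow]
    rw [mul_pow, ← pow_mul, hζln l, mul_one] at h2
    exact ht h2
  -- geometric sum identity
  have hgeom : ∀ l : ℕ, (∑ m ∈ range n, (t * ζ ^ l) ^ m) * (1 - t * ζ ^ l) = 1 - t ^ n := by
    intro l
    have h1 := geom_sum_mul (t * ζ ^ l) n
    linear_combination -h1 - t ^ n * hζln l
  -- character sum
  have hG : ∀ k : ℤ, ∑ l ∈ range n, ζ ^ ((l : ℤ) * k) = if (n : ℤ) ∣ k then (n : F) else 0 := by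
    intro k
    have hw : ∀ l : ℕ, ζ ^ ((l : ℤ) * k) = (ζ ^ k) ^ l := by
      intro l; rw [mul_comm, zpow_mul, zpow_natCast]
    simp only [hw]
    by_cases h : (n : ℤ) ∣ k
    · rw [if_pos h, (hζ.zpow_eq_one_iff_dvd k).mpr h]
      simp
    · rw [if_neg h]
      have hw1 : ζ ^ k ≠ 1 := fun hk => h ((hζ.zpow_eq_one_iff_dvd k).mp hk)
      have hwn : (ζ ^ k) ^ n = 1 := by
        rw [← zpow_natCast, ← zpow_mul, mul_comm, zpow_mul, zpow_natCast, hζn, one_zpow]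
      have h2 := geom_sum_mul (ζ ^ k) n
      rw [hwn, sub_self] at h2
      rcases mul_eq_zero.mp h2 with h' | h'
      · exact h'
      · exact absurd (by linear_combination h' : ζ ^ k = 1) hw1
  -- expand each term of the product
  have key : ∀ l m : ℕ,
      ζ ^ (l * j) * (1 - b * ζ ^ (-(l : ℤ))) * (t * ζ ^ l) ^ m
        = t ^ m * ζ ^ ((l : ℤ) * ((j : ℤ) + m)) - b * t ^ m * ζ ^ ((l : ℤ) * ((j : ℤ) + m - 1)) := by
    intro l m
    have h1 : ζ ^ ((l : ℤ) * ((j : ℤ) + m)) = ζ ^ (l * j) * ζ ^ (l * m) := by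
      rw [← zpow_natCast ζ (l * j), ← zpow_natCast ζ (l * m), ← zpow_add₀ hζ0]
      congr 1; push_cast; ring
    have h2 : ζ ^ ((l : ℤ) * ((j : ℤ) + m - 1)) = ζ ^ (l * j) * ζ ^ (l * m) * ζ ^ (-(l : ℤ)) := by
      rw [← zpow_natCast ζ (l * j), ← zpow_natCast ζ (l * m), ← zpow_add₀ hζ0, ← zpow_add₀ hζ0]
      congr 1; push_cast; ring
    rw [h1, h2, mul_pow, ← pow_mul]
    ring
  -- rewrite each summand using the geometric sum
  have step1 : ∑ l ∈ range n, ζ ^ (l * j) * (1 - b * ζ ^ (-(l : ℤ))) / (1 - t * ζ ^ l)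
      = (∑ l ∈ range n, ∑ m ∈ range n,
          (t ^ m * ζ ^ ((l : ℤ) * ((j : ℤ) + m)) - b * t ^ m * ζ ^ ((l : ℤ) * ((j : ℤ) + m - 1))))
        / (1 - t ^ n) := by
    rw [Finset.sum_div]
    refine Finset.sum_congr rfl fun l _ => ?_
    rw [div_eq_div_iff (hden l) htn, ← hgeom l,
      show (∑ m ∈ range n, (t ^ m * ζ ^ ((l : ℤ) * ((j : ℤ) + m))
          - b * t ^ m * ζ ^ ((l : ℤ) * ((j : ℤ) + m - 1))))
        = ∑ m ∈ range n, ζ ^ (l * j) * (1 - b * ζ ^ (-(l : ℤ))) * (t * ζ ^ l) ^ m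
        from Finset.sum_congr rfl fun m _ => (key l m).symm,
      ← Finset.mul_sum]
    ring
  rw [step1, Finset.sum_comm]
  have hd0 : ∀ m : ℕ, m < n → (((n : ℤ) ∣ ((j : ℤ) + m)) ↔ m = j₀) := by
    intro m hm
    have := sum_geom_primitiveRoot_aux n (-(j : ℤ)) m j₀ hm hj₀lt hj₀
    rw [show (m : ℤ) - -(j : ℤ) = (j : ℤ) + m from by ring] at this
    exact this
  have hd1 : ∀ m : ℕ, m < n → (((n : ℤ) ∣ ((j : ℤ) + m - 1)) ↔ m = j₁) := by
    intro m hm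
    have := sum_geom_primitiveRoot_aux n (1 - (j : ℤ)) m j₁ hm hj₁lt hj₁
    rw [show (m : ℤ) - (1 - (j : ℤ)) = (j : ℤ) + m - 1 from by ring] at this
    exact this
  have hsplit : ∀ m ∈ range n, ∑ l ∈ range n,
      (t ^ m * ζ ^ ((l : ℤ) * ((j : ℤ) + m)) - b * t ^ m * ζ ^ ((l : ℤ) * ((j : ℤ) + m - 1)))
      = (if m = j₀ then t ^ m * (n : F) else 0)
        - b * (if m = j₁ then t ^ m * (n : F) else 0) := by
    intro m hm
    rw [Finset.mem_range] at hm
    rw [Finset.sum_sub_distrib, ← Finset.mul_sum, ← Finset.mul_sum, hG, hG, mul_assoc]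
    congr 1
    · by_cases h : m = j₀
      · rw [if_pos ((hd0 m hm).mpr h), if_pos h]
      · rw [if_neg (fun hd => h ((hd0 m hm).mp hd)), if_neg h, mul_zero]
    · congr 1
      by_cases h : m = j₁
      · rw [if_pos ((hd1 m hm).mpr h), if_pos h]
      · rw [if_neg (fun hd => h ((hd1 m hm).mp hd)), if_neg h, mul_zero]
  rw [Finset.sum_congr rfl hsplit, Finset.sum_sub_distrib, ← Finset.mul_sum,
    Finset.sum_ite_eq' (range n) j₀ (fun m => t ^ m * (n : F)),
    Finset.sum_ite_eq' (range n) j₁ (fun m => t ^ m * (n : F)),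
    if_pos (Finset.mem_range.mpr hj₀lt), if_pos (Finset.mem_range.mpr hj₁lt)]
  field_simp
end

section
/- Let p be an odd prime, let ψ be an additive character of ℚ_p with conductor ℤ_p, and let μ be the Haar measure on (ℚ_p, +) with μ(ℤ_p) = 1. Let M ≥ 1 and k > M be integers and let u ∈ ℤ_p^× be a unit. Then ∫_{1 + p^{k−M}ℤ_p} ψ(u·p^{−k}·y²) dμ(y) = 0. -/
open MeasureTheory

noncomputable instance (p : ℕ) [Fact p.Prime] : MeasurableSpace ℚ_[p] := borel _

instance (p : ℕ) [Fact p.Prime] : BorelSpace ℚ_[p] := ⟨rfl⟩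

/-- For `p` odd, an unramified additive character `ψ` of `ℚ_p`, Haar measure normalized by
`μ(ℤ_p) = 1`, integers `M ≥ 1`, `k > M` and a unit `u ∈ ℤ_p^×`:
`∫_{1 + p^{k-M}ℤ_p} ψ(u p^{-k} y²) dy = 0`. -/
theorem integral_gauss_coset_eq_zero (p : ℕ) [Fact p.Prime] (hp : p ≠ 2)
    (ψ : AddChar ℚ_[p] ℂ)
    (hψ_cont : Continuous ψ) (hψ_norm : ∀ x : ℚ_[p], ‖ψ x‖ = 1)
    (hψ_triv : ∀ x : ℚ_[p], ‖x‖ ≤ 1 → ψ x = 1)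
    (hψ_nontriv : ∃ x : ℚ_[p], ‖x‖ ≤ (p : ℝ) ∧ ψ x ≠ 1)
    (μ : Measure ℚ_[p]) [μ.IsAddHaarMeasure]
    (hμ : μ {x : ℚ_[p] | ‖x‖ ≤ 1} = 1)
    (M k : ℤ) (hM : 1 ≤ M) (hk : M < k)
    (u : ℚ_[p]) (hu : ‖u‖ = 1) :
    ∫ y in {y : ℚ_[p] | ‖y - 1‖ ≤ (p : ℝ) ^ (-(k - M))},
        ψ (u * (p : ℚ_[p]) ^ (-k) * y ^ 2) ∂μ = 0 := by
  obtain ⟨x, hxle, hxne⟩ := hψ_nontriv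
  have hp1 : (1 : ℝ) < p := by exact_mod_cast (Fact.out : p.Prime).one_lt
  have hp0 : (0 : ℝ) < p := by linarith
  have hpQ : (p : ℚ_[p]) ≠ 0 := by
    exact_mod_cast Nat.cast_ne_zero.mpr (Fact.out : p.Prime).ne_zero
  have hu0 : u ≠ 0 := by
    intro h; rw [h, norm_zero] at hu; exact one_ne_zero hu.symm
  have h2 : ‖(2 : ℚ_[p])‖ = 1 := by
    have h2le : ‖((2 : ℤ) : ℚ_[p])‖ ≤ 1 := Padic.norm_int_le_one 2
    have h2lt : ¬ ‖((2 : ℤ) : ℚ_[p])‖ < 1 := by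
      rw [Padic.norm_intCast_lt_one_iff]
      intro h
      have hdvd : p ∣ 2 := by exact_mod_cast h
      have h1 := Nat.le_of_dvd (by norm_num) hdvd
      have h2 := (Fact.out : p.Prime).two_le
      omega
    push_cast at h2le h2lt
    linarith [le_of_not_gt h2lt]
  have h20 : (2 : ℚ_[p]) ≠ 0 := by
    intro h; rw [h, norm_zero] at h2; exact one_ne_zero h2.symm
  set r : ℝ := (p : ℝ) ^ (-(k - M)) with hr
  set S : Set ℚ_[p] := {y : ℚ_[p] | ‖y - 1‖ ≤ r} with hSdef
  set s : ℚ_[p] := x * (p : ℚ_[p]) ^ k / (2 * u) with hs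
  -- norm of s
  have hsnorm : ‖s‖ ≤ (p : ℝ) ^ (1 - k) := by
    rw [hs, norm_div, norm_mul, norm_mul, h2, hu, Padic.norm_p_zpow]
    rw [one_mul, div_one]
    calc ‖x‖ * (p : ℝ) ^ (-k) ≤ (p : ℝ) * (p : ℝ) ^ (-k) := by
          apply mul_le_mul_of_nonneg_right hxle (zpow_nonneg (le_of_lt hp0) _)
      _ = (p : ℝ) ^ (1 - k) := by
          rw [sub_eq_add_neg, zpow_add₀ (ne_of_gt hp0), zpow_one]
  have hsr : ‖s‖ ≤ r := by
    refine hsnorm.trans ?_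
    rw [hr]
    apply zpow_le_zpow_right₀ (le_of_lt hp1)
    omega
  -- S is invariant under translation by s
  have hinv : ∀ y : ℚ_[p], y + s ∈ S ↔ y ∈ S := by
    intro y
    constructor
    · intro h
      have : ‖y - 1‖ = ‖(y + s - 1) + (-s)‖ := by ring_nf
      rw [hSdef, Set.mem_setOf_eq, this]
      refine (Padic.nonarchimedean _ _).trans (max_le h ?_)
      rwa [norm_neg]
    · intro h
      have : ‖y + s - 1‖ = ‖(y - 1) + s‖ := by ring_nf
      rw [hSdef, Set.mem_setOf_eq, this]
      exact (Padic.nonarchimedean _ _).trans (max_le h hsr)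
  -- key pointwise identity
  have key : ∀ y ∈ S, ψ (u * (p : ℚ_[p]) ^ (-k) * (y + s) ^ 2)
      = ψ x * ψ (u * (p : ℚ_[p]) ^ (-k) * y ^ 2) := by
    intro y hy
    have hsplit : u * (p : ℚ_[p]) ^ (-k) * (y + s) ^ 2
        = (u * (p : ℚ_[p]) ^ (-k) * y ^ 2) + (x + (x * (y - 1) + u * (p : ℚ_[p]) ^ (-k) * s ^ 2)) := by
      have hpk : (p : ℚ_[p]) ^ k ≠ 0 := zpow_ne_zero _ hpQ
      have hxs : 2 * u * (p : ℚ_[p]) ^ (-k) * s = x := by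
        rw [hs, zpow_neg]
        field_simp
      linear_combination y * hxs
    rw [hsplit, AddChar.map_add_eq_mul, AddChar.map_add_eq_mul, AddChar.map_add_eq_mul]
    have h1 : ψ (x * (y - 1)) = 1 := by
      apply hψ_triv
      rw [norm_mul]
      calc ‖x‖ * ‖y - 1‖ ≤ (p : ℝ) * (p : ℝ) ^ (-(k - M)) := by
            apply mul_le_mul hxle hy (norm_nonneg _) (le_of_lt hp0)
        _ = (p : ℝ) ^ (1 - (k - M)) := by
            rw [show (1 : ℤ) - (k - M) = 1 + -(k - M) by ring,
              zpow_add₀ (ne_of_gt hp0), zpow_one]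
        _ ≤ 1 := by
            rw [show (1:ℝ) = (p:ℝ) ^ (0:ℤ) by simp]
            apply zpow_le_zpow_right₀ (le_of_lt hp1)
            omega
    have h2' : ψ (u * (p : ℚ_[p]) ^ (-k) * s ^ 2) = 1 := by
      apply hψ_triv
      rw [norm_mul, norm_mul, hu, Padic.norm_p_zpow, norm_pow, one_mul, neg_neg]
      calc (p : ℝ) ^ k * ‖s‖ ^ 2 ≤ (p : ℝ) ^ k * ((p : ℝ) ^ (1 - k)) ^ 2 := by
            apply mul_le_mul_of_nonneg_left _ (zpow_nonneg (le_of_lt hp0) _)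
            exact pow_le_pow_left₀ (norm_nonneg _) hsnorm 2
        _ = (p : ℝ) ^ (2 - k) := by
            rw [← zpow_natCast ((p:ℝ) ^ (1 - k)) 2, ← zpow_mul, ← zpow_add₀ (ne_of_gt hp0)]
            ring_nf
        _ ≤ 1 := by
            rw [show (1:ℝ) = (p:ℝ) ^ (0:ℤ) by simp]
            apply zpow_le_zpow_right₀ (le_of_lt hp1)
            omega
    rw [h1, h2']
    ring
  -- translation invariance
  have hSmeas : MeasurableSet S := by
    have : IsClosed S := isClosed_le (by fun_prop) continuous_const
    exact this.measurableSet
  set f : ℚ_[p] → ℂ := fun y => ψ (u * (p : ℚ_[p]) ^ (-k) * y ^ 2) with hf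
  have htrans : ∫ y in S, f (y + s) ∂μ = ∫ y in S, f y ∂μ := by
    rw [← integral_indicator hSmeas, ← integral_indicator hSmeas]
    have : (S.indicator fun y => f (y + s)) = fun y => S.indicator f (y + s) := by
      funext y
      by_cases hy : y ∈ S
      · rw [Set.indicator_of_mem hy, Set.indicator_of_mem ((hinv y).mpr hy)]
      · rw [Set.indicator_of_notMem hy, Set.indicator_of_notMem (fun h => hy ((hinv y).mp h))]
    rw [this]
    exact integral_add_right_eq_self (S.indicator f) s
  have hcongr : ∫ y in S, f (y + s) ∂μ = ψ x * ∫ y in S, f y ∂μ := by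
    rw [← integral_const_mul]
    exact setIntegral_congr_fun hSmeas (fun y hy => key y hy)
  have hfin : (1 - ψ x) * ∫ y in S, f y ∂μ = 0 := by
    rw [sub_mul, one_mul, ← hcongr, htrans]
    ring
  rcases mul_eq_zero.mp hfin with h | h
  · exact absurd (sub_eq_zero.mp h).symm hxne
  · exact h
end

section
/- Let p be an odd prime, let ψ be an additive character of ℚ_p with conductor ℤ_p, and let μ be the Haar measure on (ℚ_p, +) with μ(ℤ_p) = 1. Let M ≥ 1 be an integer and let z ∈ ℚ_p^× satisfy ‖z‖ < p^{-M}. Then ∫_{p^{-M}ℤ_p} ψ(z·c² − 2c) dμ(c) = 0. -/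
open MeasureTheory

/-- For `p` odd, an unramified additive character `ψ` of `ℚ_p`, Haar measure normalized by
`μ(ℤ_p) = 1`, an integer `M ≥ 1` and `z ∈ ℚ_p^×` with `‖z‖ < p^{-M}`:
`∫_{p^{-M}ℤ_p} ψ(z c² - 2c) dc = 0`. -/
theorem integral_complete_square_vanish (p : ℕ) [Fact p.Prime] (hp : p ≠ 2)
    (ψ : AddChar ℚ_[p] ℂ)
    (hψ_cont : Continuous ψ) (hψ_norm : ∀ x : ℚ_[p], ‖ψ x‖ = 1)
    (hψ_triv : ∀ x : ℚ_[p], ‖x‖ ≤ 1 → ψ x = 1)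
    (hψ_nontriv : ∃ x : ℚ_[p], ‖x‖ ≤ (p : ℝ) ∧ ψ x ≠ 1)
    (μ : Measure ℚ_[p]) [μ.IsAddHaarMeasure]
    (hμ : μ {x : ℚ_[p] | ‖x‖ ≤ 1} = 1)
    (M : ℤ) (hM : 1 ≤ M) (z : ℚ_[p]) (hz : z ≠ 0) (hz' : ‖z‖ < (p : ℝ) ^ (-M)) :
    ∫ c in {c : ℚ_[p] | ‖c‖ ≤ (p : ℝ) ^ M}, ψ (z * c ^ 2 - 2 * c) ∂μ = 0 := by
  obtain ⟨x, hx_le, hx_ne⟩ := hψ_nontriv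
  have hp_prime : p.Prime := Fact.out
  have hp1 : (1 : ℝ) < (p : ℝ) := by exact_mod_cast hp_prime.one_lt
  have hp0 : (0 : ℝ) < (p : ℝ) := by positivity
  -- ‖2‖ = 1
  have h2ne : (2 : ℚ_[p]) ≠ 0 := two_ne_zero
  have h2norm : ‖(2 : ℚ_[p])‖ = 1 := by
    have hle : ‖((2 : ℤ) : ℚ_[p])‖ ≤ 1 := Padic.norm_int_le_one 2
    have hnlt : ¬ ‖((2 : ℤ) : ℚ_[p])‖ < 1 := by
      rw [Padic.norm_intCast_lt_one_iff]
      intro hdvd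
      have h1 := Int.le_of_dvd (by norm_num) hdvd
      have h2 := hp_prime.two_le
      omega
    push_cast at hle hnlt
    linarith
  set t : ℚ_[p] := x / (-2) with ht_def
  have ht_x : -2 * t = x := by
    rw [ht_def]; field_simp
  have ht_norm : ‖t‖ = ‖x‖ := by
    rw [ht_def, norm_div, norm_neg, h2norm, div_one]
  have ht_le : ‖t‖ ≤ (p : ℝ) := by rw [ht_norm]; exact hx_le
  have hpM : (p : ℝ) ≤ (p : ℝ) ^ M := by
    calc (p : ℝ) = (p : ℝ) ^ (1 : ℤ) := (zpow_one _).symm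
    _ ≤ (p : ℝ) ^ M := zpow_le_zpow_right₀ hp1.le hM
  have ht_leM : ‖t‖ ≤ (p : ℝ) ^ M := ht_le.trans hpM
  -- ‖z‖ ≤ p^(-M-1)
  have hz_le : ‖z‖ ≤ (p : ℝ) ^ (-M - 1) := by
    rw [← Padic.norm_lt_pow_iff_norm_le_pow_sub_one]
    exact hz'
  set B : Set ℚ_[p] := {c : ℚ_[p] | ‖c‖ ≤ (p : ℝ) ^ M} with hB_def
  have hB_meas : MeasurableSet B :=
    measurableSet_le (by fun_prop) measurable_const
  -- B is invariant under translation by t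
  have hBt : ∀ c : ℚ_[p], c + t ∈ B ↔ c ∈ B := by
    intro c
    constructor
    · intro h
      have : ‖c‖ = ‖(c + t) + (-t)‖ := by ring_nf
      rw [hB_def, Set.mem_setOf_eq, this]
      exact le_trans (Padic.nonarchimedean _ _)
        (max_le h (by rwa [norm_neg]))
    · intro h
      exact le_trans (Padic.nonarchimedean _ _) (max_le h ht_leM)
  set f : ℚ_[p] → ℂ := fun c => ψ (z * c ^ 2 - 2 * c) with hf_def
  -- key pointwise identity on B
  have hkey : ∀ c ∈ B, f (c + t) = ψ x * f c := by
    intro c hc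
    have hcnorm : ‖c‖ ≤ (p : ℝ) ^ M := hc
    have hid : z * (c + t) ^ 2 - 2 * (c + t)
        = (z * (2 * c * t + t ^ 2)) + (-2 * t) + (z * c ^ 2 - 2 * c) := by ring
    have htriv : ψ (z * (2 * c * t + t ^ 2)) = 1 := by
      apply hψ_triv
      have h1 : ‖z * (2 * c * t)‖ ≤ 1 := by
        rw [norm_mul, norm_mul, norm_mul, h2norm, one_mul]
        calc ‖z‖ * (‖c‖ * ‖t‖) ≤ (p : ℝ) ^ (-M - 1) * ((p : ℝ) ^ M * (p : ℝ)) := by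
              apply mul_le_mul hz_le _ (by positivity) (by positivity)
              exact mul_le_mul hcnorm ht_le (norm_nonneg _) (by positivity)
          _ = (p : ℝ) ^ (-M - 1) * (p : ℝ) ^ (M + 1) := by
              rw [zpow_add_one₀ (ne_of_gt hp0)]
          _ = 1 := by
              rw [← zpow_add₀ (ne_of_gt hp0)]; norm_num
      have h2 : ‖z * t ^ 2‖ ≤ 1 := by
        rw [norm_mul, norm_pow]
        calc ‖z‖ * ‖t‖ ^ 2 ≤ (p : ℝ) ^ (-M - 1) * (p : ℝ) ^ 2 := by
              apply mul_le_mul hz_le (pow_le_pow_left₀ (norm_nonneg _) ht_le 2)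
                (by positivity) (by positivity)
          _ = (p : ℝ) ^ (-M - 1 + 2) := by
              rw [← zpow_natCast (p : ℝ) 2, ← zpow_add₀ (ne_of_gt hp0)]
              norm_num
          _ ≤ (p : ℝ) ^ (0 : ℤ) := zpow_le_zpow_right₀ hp1.le (by omega)
          _ = 1 := zpow_zero _
      have : z * (2 * c * t + t ^ 2) = z * (2 * c * t) + z * t ^ 2 := by ring
      rw [this]
      exact le_trans (Padic.nonarchimedean _ _) (max_le h1 h2)
    rw [hf_def]
    simp only
    rw [hid, AddChar.map_add_eq_mul, AddChar.map_add_eq_mul, htriv, one_mul, ht_x]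
  -- rewrite the set integral as an indicator integral and translate
  set I : ℂ := ∫ c in B, f c ∂μ with hI_def
  have hmap : I = ψ x * I := by
    have h1 : I = ∫ c, B.indicator f c ∂μ := (integral_indicator hB_meas).symm
    have h2 : ∫ c, B.indicator f c ∂μ = ∫ c, B.indicator f (c + t) ∂μ :=
      (integral_add_right_eq_self (B.indicator f) t).symm
    have h3 : ∀ c : ℚ_[p], B.indicator f (c + t) = ψ x * B.indicator f c := by
      intro c
      by_cases hc : c ∈ B
      · rw [Set.indicator_of_mem ((hBt c).2 hc), Set.indicator_of_mem hc, hkey c hc]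
      · rw [Set.indicator_of_notMem (fun h => hc ((hBt c).1 h)),
          Set.indicator_of_notMem hc, mul_zero]
    calc I = ∫ c, B.indicator f (c + t) ∂μ := by rw [h1, h2]
      _ = ∫ c, ψ x * B.indicator f c ∂μ := by simp_rw [h3]
      _ = ψ x * ∫ c, B.indicator f c ∂μ := integral_const_mul _ _
      _ = ψ x * I := by rw [← h1]
  have : (ψ x - 1) * I = 0 := by
    rw [sub_mul, one_mul, ← hmap, sub_self]
  rcases mul_eq_zero.1 this with h | h
  · exact (hx_ne (sub_eq_zero.1 h)).elim
  · exact h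
end
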